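/- arXiv:2106.00070 — 5 statements merged into one kernel-verified Lean document; each statement's English description precedes it below -/
import Mathlib

section
/- Let K be a field of characteristic zero, let A be a finitely generated commutative associative K-algebra without zero divisors, let 𝔲 be a finite-dimensional nilpotent Lie algebra over K, and let D : 𝔲 → Der_K(A) be a Lie algebra homomorphism into the K-derivations of A such that D_y is locally nilpotent for every y ∈ 𝔲. Suppose x ∈ 𝔲 satisfies: D_x ≠ 0, and D_{[y,x]} = 0 for every y ∈ 𝔲. Then there exist elements a₁ ∈ A and a₀ ∈ A with a₀ ≠ 0, D_x(a₁) = a₀, and D_y(a₀) = 0 for all y ∈ 𝔲 (i.e. a₀ is a nonzero 𝔲-invariant in the image of D_x). -/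
/-!
Since every `D_y` commutes with `D_x`, the image `D_x(A)` is a nonzero `𝔲`-submodule of `A`, and
it suffices to find a nonzero invariant in it. Descend the lower central series
`𝔲 = C⁰ ⊇ C¹ ⊇ ⋯ ⊇ Cᵏ = 0`: on the joint kernel of `Cⁱ⁺¹` the elements of `Cⁱ` act by commuting
locally nilpotent operators, and finitely many such operators (a spanning set of `Cⁱ`) have a
common nonzero kernel vector in every nonzero invariant subspace.
-/

namespace Module.End

variable {K M : Type*} [CommRing K] [AddCommGroup M] [Module K M]

def IsLocallyNilpotent (f : Module.End K M) : Prop :=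
  ∀ m, ∃ n : ℕ, (f ^ n) m = 0

theorem IsLocallyNilpotent.inf_ker_ne_bot {f : Module.End K M} (hf : f.IsLocallyNilpotent)
    {q : Submodule K M} (hq : ∀ m ∈ q, f m ∈ q) (hq0 : q ≠ ⊥) :
    q ⊓ LinearMap.ker f ≠ ⊥ := by
  classical
  obtain ⟨m, hmq, hm0⟩ := Submodule.exists_mem_ne_zero_of_ne_bot hq0
  have hpow : ∀ n : ℕ, (f ^ n) m ∈ q := by
    intro n
    induction n with
    | zero => simpa using hmq
    | succ n ih => rw [pow_succ', Module.End.mul_apply]; exact hq _ ih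
  -- the last nonzero vector `f ^ n m` before the orbit of `m` reaches zero
  obtain ⟨n, hn⟩ : ∃ n, Nat.find (hf m) = n + 1 :=
    Nat.exists_eq_succ_of_ne_zero fun h => hm0 (by simpa [h] using Nat.find_spec (hf m))
  refine (Submodule.ne_bot_iff _).2 ⟨(f ^ n) m, ⟨hpow n, ?_⟩, Nat.find_min (hf m) (by omega)⟩
  change f ((f ^ n) m) = 0
  rw [← Module.End.mul_apply, ← pow_succ', ← hn]
  exact Nat.find_spec (hf m)

theorem inf_iInf_ker_ne_bot_of_commute {ι : Type*} (f : ι → Module.End K M) (s : Finset ι)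
    (hf : ∀ i ∈ s, (f i).IsLocallyNilpotent) {q : Submodule K M}
    (hq : ∀ i ∈ s, ∀ m ∈ q, f i m ∈ q)
    (hcomm : ∀ i ∈ s, ∀ j ∈ s, ∀ m ∈ q, f i (f j m) = f j (f i m)) (hq0 : q ≠ ⊥) :
    q ⊓ ⨅ i ∈ s, LinearMap.ker (f i) ≠ ⊥ := by
  classical
  induction s using Finset.induction_on generalizing q with
  | empty => simpa using hq0
  | insert g s hgs ih =>
    simp only [Finset.mem_insert, forall_eq_or_imp] at hf hq hcomm
    have hg0 : q ⊓ LinearMap.ker (f g) ≠ ⊥ := hf.1.inf_ker_ne_bot hq.1 hq0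
    have hgq : ∀ i ∈ s, ∀ m ∈ q ⊓ LinearMap.ker (f g), f i m ∈ q ⊓ LinearMap.ker (f g) := by
      intro i hi m hm
      obtain ⟨hmq, hmg : f g m = 0⟩ := Submodule.mem_inf.1 hm
      refine Submodule.mem_inf.2 ⟨hq.2 i hi m hmq, ?_⟩
      change f g (f i m) = 0
      rw [hcomm.1.2 i hi m hmq, hmg, map_zero]
    have := ih hf.2 hgq (fun i hi j hj m hm => hcomm.2 i hi |>.2 j hj m hm.1) hg0
    rwa [Finset.iInf_insert, ← inf_assoc]

end Module.End

namespace LieModule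

variable {K L M : Type*} [CommRing K] [LieRing L] [LieAlgebra K L] [AddCommGroup M] [Module K M]
  [LieRingModule L M] [LieModule K L M]

variable (K M) in
def jointKer (S : Submodule K L) : Submodule K M :=
  ⨅ y ∈ S, LinearMap.ker (toEnd K L M y)

theorem mem_jointKer {S : Submodule K L} {m : M} : m ∈ jointKer K M S ↔ ∀ y ∈ S, ⁅y, m⁆ = 0 := by
  simp [jointKer]

theorem jointKer_span (s : Set L) :
    jointKer K M (Submodule.span K s) = ⨅ y ∈ s, LinearMap.ker (toEnd K L M y) := by
  ext m
  simp only [mem_jointKer, Submodule.mem_iInf, LinearMap.mem_ker, toEnd_apply_apply]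
  refine ⟨fun h y hy => h y (Submodule.subset_span hy), fun h y hy => ?_⟩
  induction hy using Submodule.span_induction with
  | mem y hy => exact h y hy
  | zero => exact zero_lie m
  | add y z _ _ hy hz => rw [add_lie, hy, hz, add_zero]
  | smul c y _ hy => rw [smul_lie, hy, smul_zero]

theorem inf_jointKer_ne_bot_of_lie_mem {S W : Submodule K L} (hS : S.FG)
    (hSW : ∀ y ∈ S, ∀ z : L, ⁅z, y⁆ ∈ W) (hln : ∀ y : L, (toEnd K L M y).IsLocallyNilpotent)
    {N : LieSubmodule K L M} (hW : N.toSubmodule ⊓ jointKer K M W ≠ ⊥) :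
    N.toSubmodule ⊓ jointKer K M S ≠ ⊥ := by
  obtain ⟨s, rfl⟩ := hS
  have hs : ∀ y ∈ s, y ∈ Submodule.span K (s : Set L) := fun y hy => Submodule.subset_span hy
  -- modulo `W`, which acts trivially on `q`, the elements of `S` are central
  set q := N.toSubmodule ⊓ jointKer K M W
  have hinv : ∀ y ∈ s, ∀ m ∈ q, ⁅y, m⁆ ∈ q := by
    intro y hy m hm
    obtain ⟨hmN, hmW⟩ := Submodule.mem_inf.1 hm
    rw [mem_jointKer] at hmW
    refine Submodule.mem_inf.2 ⟨N.lie_mem hmN, mem_jointKer.2 fun w hw => ?_⟩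
    rw [leibniz_lie, hmW _ (hSW y (hs y hy) w), hmW w hw, lie_zero, add_zero]
  have hcomm : ∀ y ∈ s, ∀ z ∈ s, ∀ m ∈ q, ⁅y, ⁅z, m⁆⁆ = ⁅z, ⁅y, m⁆⁆ := by
    intro y hy z hz m hm
    rw [leibniz_lie, mem_jointKer.1 (Submodule.mem_inf.1 hm).2 _ (hSW z (hs z hz) y), zero_add]
  have := Module.End.inf_iInf_ker_ne_bot_of_commute (toEnd K L M) s (fun y _ => hln y) hinv hcomm hW
  rw [jointKer_span]
  simp only [Finset.mem_coe]
  exact ne_bot_of_le_ne_bot this (inf_le_inf_right _ inf_le_left)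

theorem exists_ne_zero_forall_lie_eq_zero [IsNoetherian K L] [LieRing.IsNilpotent L]
    (hln : ∀ y : L, (toEnd K L M y).IsLocallyNilpotent) {N : LieSubmodule K L M} (hN : N ≠ ⊥) :
    ∃ m ∈ N, m ≠ 0 ∧ ∀ y : L, ⁅y, m⁆ = 0 := by
  obtain ⟨k, hk⟩ := IsNilpotent.nilpotent K L L
  have descend : ∀ i, N.toSubmodule ⊓ jointKer K M (lowerCentralSeries K L L i).toSubmodule ≠ ⊥ →
      N.toSubmodule ⊓ jointKer K M (⊤ : Submodule K L) ≠ ⊥ := by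
    intro i
    induction i with
    | zero => exact id
    | succ i ih =>
      refine fun h => ih (inf_jointKer_ne_bot_of_lie_mem (IsNoetherian.noetherian _)
        (fun y hy z => ?_) hln h)
      rw [lowerCentralSeries_succ]
      exact LieSubmodule.lie_mem_lie (LieSubmodule.mem_top z) hy
  obtain ⟨m, hm, hm0⟩ := Submodule.exists_mem_ne_zero_of_ne_bot (descend k (by simpa [hk, jointKer]))
  exact ⟨m, hm.1, hm0, fun y => mem_jointKer.1 hm.2 y trivial⟩

end LieModule

theorem stmt_0_general
    (K : Type*) [Field K]
    (A : Type*) [CommRing A] [Algebra K A]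
    (𝔲 : Type*) [LieRing 𝔲] [LieAlgebra K 𝔲]
    [Module.Finite K 𝔲] [LieRing.IsNilpotent 𝔲]
    (D : 𝔲 →ₗ⁅K⁆ Derivation K A A)
    (hln : ∀ (y : 𝔲) (a : A), ∃ n : ℕ, (⇑(D y))^[n] a = 0)
    (x : 𝔲) (hx : D x ≠ 0)
    (hcentral : ∀ y : 𝔲, D ⁅y, x⁆ = 0) :
    ∃ (a₁ a₀ : A), a₀ ≠ 0 ∧ D x a₁ = a₀ ∧ ∀ y : 𝔲, D y a₀ = 0 := by
  let _ : LieRingModule 𝔲 A := LieRingModule.compLieHom A D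
  have : LieModule K 𝔲 A := LieModule.compLieHom A D
  have hcomm (y : 𝔲) (a : A) : D y (D x a) = D x (D y a) := by
    rw [← sub_eq_zero, ← Derivation.commutator_apply, ← LieHom.map_lie, hcentral,
      Derivation.zero_apply]
  let N : LieSubmodule K 𝔲 A :=
    { LinearMap.range (D x : A →ₗ[K] A) with
      lie_mem := by
        rintro y _ ⟨a, rfl⟩
        exact ⟨D y a, (hcomm y a).symm⟩ }
  have hN : N ≠ ⊥ := by
    rw [Ne, LieSubmodule.eq_bot_iff]
    intro h
    exact hx (Derivation.ext fun a => h (D x a) ⟨a, rfl⟩)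
  have hln' (y : 𝔲) : (LieModule.toEnd K 𝔲 A y).IsLocallyNilpotent := fun a => by
    obtain ⟨n, hn⟩ := hln y a
    exact ⟨n, by rw [Module.End.pow_apply]; exact hn⟩
  obtain ⟨_, ⟨a₁, rfl⟩, ha₀, hinv⟩ := LieModule.exists_ne_zero_forall_lie_eq_zero hln' hN
  exact ⟨a₁, _, ha₀, rfl, hinv⟩

/-- Lemma 1 of the paper: for a nilpotent Lie algebra `𝔲` acting on a finitely
generated commutative domain `A` over a characteristic-zero field `K` by locally
nilpotent derivations, if `x ∈ 𝔲` satisfies `D x ≠ 0` and `D ⁅y, x⁆ = 0` for all `y`,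
then there are `a₁ ∈ A`, `a₀ ∈ A`, `a₀ ≠ 0`, with `D x a₁ = a₀` and `a₀` a
`𝔲`-invariant. -/
theorem stmt_0
    (K : Type*) [Field K] [CharZero K]
    (A : Type*) [CommRing A] [IsDomain A] [Algebra K A] [Algebra.FiniteType K A]
    (𝔲 : Type*) [LieRing 𝔲] [LieAlgebra K 𝔲]
    [Module.Finite K 𝔲] [LieRing.IsNilpotent 𝔲]
    (D : 𝔲 →ₗ⁅K⁆ Derivation K A A)
    (hln : ∀ (y : 𝔲) (a : A), ∃ n : ℕ, (⇑(D y))^[n] a = 0)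
    (x : 𝔲) (hx : D x ≠ 0)
    (hcentral : ∀ y : 𝔲, D ⁅y, x⁆ = 0) :
    ∃ (a₁ a₀ : A), a₀ ≠ 0 ∧ D x a₁ = a₀ ∧ ∀ y : 𝔲, D y a₀ = 0 :=
  stmt_0_general K A 𝔲 D hln x hx hcentral
end

section
/- Let K be a field of characteristic zero, A a commutative K-algebra, D a locally nilpotent K-derivation of A, and Q ∈ A an element with D(Q) = 1. Define S : A → A by S(a) = Σ_{k≥0} (−1)^k (k!)^{−1} Q^k D^k(a) (a finite sum by local nilpotence of D). Then S is a homomorphism of K-algebras: S(a + b) = S(a) + S(b), S(ab) = S(a)S(b), S(λ·a) = λ·S(a) for λ ∈ K, and S(1) = 1. -/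
/-!
`S a` is `exp (t • D) a = ∑ tᵏ Dᵏ a / k!` evaluated at `t = -Q`. By the general Leibniz rule,
`a ↦ exp (t • D) a` is a ring homomorphism `A → A⟦t⟧`; local nilpotence makes its values
polynomials, and evaluating those at `-Q` is again a ring homomorphism.
-/

open Finset PowerSeries Nat
open scoped Polynomial

theorem Function.iterate_eq_zero_of_le {M : Type*} [Zero M] {f : M → M} (hf : f 0 = 0) {a : M}
    {n m : ℕ} (ha : f^[n] a = 0) (h : n ≤ m) : f^[m] a = 0 := by
  rw [← Nat.sub_add_cancel h, Function.iterate_add_apply, ha, Function.iterate_fixed hf]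

theorem Nat.inv_factorial_add_mul_choose {K : Type*} [Field K] [CharZero K] (i j : ℕ) :
    ((i + j)! : K)⁻¹ * (i + j).choose i = (i ! : K)⁻¹ * (j ! : K)⁻¹ := by
  rw [cast_add_choose, div_eq_mul_inv, inv_mul_cancel_left₀ (cast_ne_zero.2 (factorial_ne_zero _)),
    mul_inv]

namespace Derivation

theorem iterate_apply_mul {R A : Type*} [CommSemiring R] [CommSemiring A] [Algebra R A]
    (D : Derivation R A A) (n : ℕ) (a b : A) :
    D^[n] (a * b) = ∑ ij ∈ antidiagonal n, n.choose ij.1 • (D^[ij.1] a * D^[ij.2] b) := by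
  induction n with
  | zero => simp
  | succ n ih =>
    rw [sum_antidiagonal_choose_succ_nsmul (fun i j => D^[i] a * D^[j] b) n]
    simp only [Function.iterate_succ_apply', ih, map_sum, map_nsmul, leibniz, smul_eq_mul,
      smul_add, sum_add_distrib]
    congr 1
    refine sum_congr rfl fun ij hij ↦ ?_
    rw [n.choose_symm_of_eq_add (mem_antidiagonal.1 hij).symm, mul_comm]

variable {K A : Type*} [Field K] [CommRing A] [Algebra K A] (D : Derivation K A A)

noncomputable def expSeries (a : A) : A⟦X⟧ :=
  PowerSeries.mk fun k => (k ! : K)⁻¹ • D^[k] a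

theorem coeff_expSeries (a : A) (k : ℕ) : coeff k (D.expSeries a) = (k ! : K)⁻¹ • D^[k] a :=
  coeff_mk _ _

theorem expSeries_add (a b : A) : D.expSeries (a + b) = D.expSeries a + D.expSeries b := by
  ext k
  simp [coeff_expSeries, iterate_map_add]

theorem expSeries_mul [CharZero K] (a b : A) :
    D.expSeries (a * b) = D.expSeries a * D.expSeries b := by
  ext n
  rw [coeff_mul, coeff_expSeries, iterate_apply_mul, smul_sum]
  refine sum_congr rfl fun ⟨i, j⟩ hij ↦ ?_
  obtain rfl : i + j = n := mem_antidiagonal.1 hij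
  rw [coeff_expSeries, coeff_expSeries, smul_mul_smul_comm, ← Nat.cast_smul_eq_nsmul K, smul_smul,
    inv_factorial_add_mul_choose]

theorem coe_trunc_expSeries {a : A} {n : ℕ} (ha : D^[n] a = 0) :
    (trunc n (D.expSeries a) : A⟦X⟧) = D.expSeries a := by
  ext k
  rw [Polynomial.coeff_coe, coeff_trunc]
  split_ifs with hk
  · rfl
  · rw [coeff_expSeries, Function.iterate_eq_zero_of_le D.map_zero ha (not_lt.1 hk), smul_zero]

theorem eval_trunc_expSeries (a t : A) (n : ℕ) :
    (trunc n (D.expSeries a)).eval t = ∑ k ∈ range n, (k ! : K)⁻¹ • (t ^ k * D^[k] a) := by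
  rw [← Polynomial.eval₂_id, eval₂_trunc_eq_sum_range]
  refine sum_congr rfl fun k _ ↦ ?_
  rw [RingHom.id_apply, coeff_expSeries, smul_mul_assoc, mul_comm]

end Derivation

theorem stmt_2_general
    (K : Type*) [Field K] [CharZero K]
    (A : Type*) [CommRing A] [Algebra K A]
    (D : Derivation K A A) (hD : ∀ a : A, ∃ n : ℕ, (⇑D)^[n] a = 0)
    (Q : A)
    (S : A → A)
    (hS : ∀ (a : A) (n : ℕ), (⇑D)^[n] a = 0 →
      S a = ∑ k ∈ Finset.range n,
        ((-1 : K) ^ k * (k.factorial : K)⁻¹) • (Q ^ k * (⇑D)^[k] a)) :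
    (∀ a b : A, S (a + b) = S a + S b) ∧
    (∀ a b : A, S (a * b) = S a * S b) ∧
    (∀ (c : K) (a : A), S (c • a) = c • S a) ∧
    S 1 = 1 := by
  have eval_eq (a : A) (P : A[X]) (hP : (P : A⟦X⟧) = D.expSeries a) : S a = P.eval (-Q) := by
    obtain ⟨n, hn⟩ := hD a
    set m := n + (P.natDegree + 1)
    have hm : D^[m] a = 0 := Function.iterate_eq_zero_of_le D.map_zero hn (n.le_add_right _)
    rw [hS a m hm, ← trunc_coe_eq_self (show P.natDegree < m by omega), hP,
      D.eval_trunc_expSeries]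
    refine sum_congr rfl fun k _ ↦ ?_
    rw [mul_smul, smul_comm, neg_pow Q, mul_assoc, Algebra.smul_def (_ ^ k), map_pow, map_neg,
      map_one]
  have poly (a : A) : ∃ P : A[X], (P : A⟦X⟧) = D.expSeries a :=
    let ⟨_, hn⟩ := hD a; ⟨_, D.coe_trunc_expSeries hn⟩
  choose P hP using poly
  have fixed (a : A) (ha : D a = 0) : S a = a := by simpa using hS a 1 ha
  have map_mul (a b : A) : S (a * b) = S a * S b := by
    rw [eval_eq a _ (hP a), eval_eq b _ (hP b),
      eval_eq _ (P a * P b) (by rw [Polynomial.coe_mul, hP a, hP b, D.expSeries_mul]),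
      Polynomial.eval_mul]
  refine ⟨fun a b ↦ ?_, map_mul, fun c a ↦ ?_, fixed 1 D.map_one_eq_zero⟩
  · rw [eval_eq a _ (hP a), eval_eq b _ (hP b),
      eval_eq _ (P a + P b) (by rw [Polynomial.coe_add, hP a, hP b, D.expSeries_add]),
      Polynomial.eval_add]
  · rw [Algebra.smul_def, Algebra.smul_def, map_mul, fixed _ (D.map_algebraMap c)]

/-- For a locally nilpotent derivation `D` of a commutative `K`-algebra `A`
(char K = 0) and `Q ∈ A` with `D Q = 1`, the map
`S a = Σ_{k≥0} (−1)^k (k!)⁻¹ Q^k D^k a` (a finite sum by local nilpotence)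
is a `K`-algebra homomorphism. -/
theorem stmt_2
    (K : Type*) [Field K] [CharZero K]
    (A : Type*) [CommRing A] [Algebra K A]
    (D : Derivation K A A) (hD : ∀ a : A, ∃ n : ℕ, (⇑D)^[n] a = 0)
    (Q : A) (hQ : D Q = 1)
    (S : A → A)
    (hS : ∀ (a : A) (n : ℕ), (⇑D)^[n] a = 0 →
      S a = ∑ k ∈ Finset.range n,
        ((-1 : K) ^ k * (k.factorial : K)⁻¹) • (Q ^ k * (⇑D)^[k] a)) :
    (∀ a b : A, S (a + b) = S a + S b) ∧
    (∀ a b : A, S (a * b) = S a * S b) ∧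
    (∀ (c : K) (a : A), S (c • a) = c • S a) ∧
    S 1 = 1 :=
  stmt_2_general K A D hD Q S hS
end

section
/- Let K be a field of characteristic zero, A a commutative K-algebra, D a locally nilpotent K-derivation of A, Q ∈ A with D(Q) = 1, and S : A → A the map S(a) = Σ_{k≥0} (−1)^k (k!)^{−1} Q^k D^k(a). Then S(Q) = 0, and the set {a ∈ A : S(a) = 0} equals the ideal of A generated by Q. -/
/-!
Since `D Q = 1`, the Leibniz rule gives `D^{k+1}(Q b) = Q D^{k+1} b + (k+1) D^k b`, so the
partial sums of `S (Q b)` telescope: the `(n+1)`-st one is `(-1)^n (n!)⁻¹ Q^{n+1} D^n b`, which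
vanishes once `D^n b = 0`. Conversely every term of `S a` but the first is a multiple of `Q`, so
`S a ≡ a` modulo `Q`, and `S a = 0` forces `Q ∣ a`.
-/

open Finset

namespace Derivation

variable {R A : Type*} [CommRing R] [CommRing A] [Algebra R A]

theorem iterate_succ_mul_of_eq_one (D : Derivation R A A) {Q : A} (hQ : D Q = 1) (b : A)
    (k : ℕ) : (⇑D)^[k + 1] (Q * b) = Q * (⇑D)^[k + 1] b + (k + 1) • (⇑D)^[k] b := by
  induction k with
  | zero => simp [leibniz, hQ]
  | succ k ih =>
    rw [Function.iterate_succ_apply' D (k + 1), ih, map_add, leibniz, hQ, map_nsmul,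
      ← Function.iterate_succ_apply' D (k + 1), ← Function.iterate_succ_apply' D k]
    simp only [smul_eq_mul, mul_one, succ_nsmul]
    abel

variable {K : Type*} [Field K] [Algebra K A]

-- `S` is known as the Dixmier map.
noncomputable def dixmierPartialSum (D : Derivation R A A) (Q : A) (n : ℕ) (a : A) : A :=
  ∑ k ∈ range n, ((-1 : K) ^ k * (k.factorial : K)⁻¹) • (Q ^ k * (⇑D)^[k] a)

theorem dixmierPartialSum_succ_mul_left [CharZero K] (D : Derivation R A A) {Q : A}
    (hQ : D Q = 1) (b : A) (n : ℕ) :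
    dixmierPartialSum (K := K) D Q (n + 1) (Q * b) =
      ((-1 : K) ^ n * (n.factorial : K)⁻¹) • (Q ^ (n + 1) * (⇑D)^[n] b) := by
  induction n with
  | zero => simp [dixmierPartialSum]
  | succ n ih =>
    have hcoeff : (-1 : K) ^ (n + 1) * ((n + 1).factorial : K)⁻¹ * (n + 1 : ℕ) =
        -((-1 : K) ^ n * (n.factorial : K)⁻¹) := by
      rw [Nat.factorial_succ]
      push_cast
      field_simp
      ring
    rw [dixmierPartialSum, sum_range_succ, ← dixmierPartialSum, ih,
      iterate_succ_mul_of_eq_one D hQ, mul_add, smul_add, ← Nat.cast_smul_eq_nsmul K,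
      mul_smul_comm, smul_smul, hcoeff, neg_smul, ← mul_assoc, ← pow_succ]
    abel

theorem dvd_dixmierPartialSum_succ_sub (D : Derivation R A A) (Q a : A) (n : ℕ) :
    Q ∣ dixmierPartialSum (K := K) D Q (n + 1) a - a := by
  rw [dixmierPartialSum, sum_range_succ']
  simp only [pow_zero, Nat.factorial_zero, Nat.cast_one, inv_one, mul_one, one_mul, one_smul,
    Function.iterate_zero, id_eq, add_sub_cancel_right]
  refine dvd_sum fun k _ => ?_
  rw [pow_succ' Q, mul_assoc, ← mul_smul_comm]
  exact dvd_mul_right _ _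

end Derivation

/-- For a locally nilpotent derivation `D` with `D Q = 1` and
`S a = Σ_{k≥0} (−1)^k (k!)⁻¹ Q^k D^k a`, one has `S Q = 0` and the kernel of `S`
is exactly the ideal of `A` generated by `Q`. -/
theorem stmt_4
    (K : Type*) [Field K] [CharZero K]
    (A : Type*) [CommRing A] [Algebra K A]
    (D : Derivation K A A) (hD : ∀ a : A, ∃ n : ℕ, (⇑D)^[n] a = 0)
    (Q : A) (hQ : D Q = 1)
    (S : A → A)
    (hS : ∀ (a : A) (n : ℕ), (⇑D)^[n] a = 0 →
      S a = ∑ k ∈ Finset.range n,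
        ((-1 : K) ^ k * (k.factorial : K)⁻¹) • (Q ^ k * (⇑D)^[k] a)) :
    S Q = 0 ∧ {a : A | S a = 0} = (Ideal.span ({Q} : Set A) : Set A) := by
  have S_mul_left : ∀ b, S (Q * b) = 0 := by
    intro b
    obtain ⟨n, hn⟩ := hD b
    have hQb : (⇑D)^[n + 1] (Q * b) = 0 := by
      rw [D.iterate_succ_mul_of_eq_one hQ, Function.iterate_succ_apply', hn, map_zero,
        mul_zero, smul_zero, add_zero]
    rw [hS _ _ hQb, ← Derivation.dixmierPartialSum, D.dixmierPartialSum_succ_mul_left hQ, hn,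
      mul_zero, smul_zero]
  refine ⟨by simpa using S_mul_left 1, Set.ext fun a => ?_⟩
  rw [Set.mem_ofPred_eq, SetLike.mem_coe, Ideal.mem_span_singleton]
  refine ⟨fun ha => ?_, fun ⟨b, hb⟩ => hb ▸ S_mul_left b⟩
  obtain ⟨n, hn⟩ := hD a
  have hSa : S a = D.dixmierPartialSum (K := K) Q (n + 1) a :=
    hS a (n + 1) (by rw [Function.iterate_succ_apply', hn, map_zero])
  have hdvd := D.dvd_dixmierPartialSum_succ_sub (K := K) Q a n
  rwa [← hSa, ha, zero_sub, dvd_neg] at hdvd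
end

section
/- Let K be a field of characteristic zero, A a commutative K-algebra, and let D₁, …, D_k be locally nilpotent K-derivations of A together with elements Q₁, …, Q_k ∈ A satisfying D_i(Q_j) = 0 whenever i > j and D_j(Q_j) = 1 for each j. For each j let S_j : A → A be the map S_j(a) = Σ_{r≥0} (−1)^r (r!)^{−1} Q_j^r D_j^r(a), and set P = S₁ ∘ S₂ ∘ ⋯ ∘ S_k. Then P(Q_j) = 0 for every 1 ≤ j ≤ k, and consequently the ideal of A generated by Q₁, …, Q_k is contained in the kernel of P. -/
/-!
For a locally nilpotent derivation `D`, the map `a ↦ exp (X • D) a = ∑ (r!)⁻¹ D^r(a) X^r` is a ring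
homomorphism `A → A[X]`: comparing coefficients, multiplicativity is the general Leibniz rule
`D^n(ab) = ∑ (n choose i) D^i(a) D^(n-i)(b)`. The map `S_j` is its evaluation at `X = -Q_j`, so
every `S_j`, and hence `P`, is a ring homomorphism. Since `D_j Q_j = 1` we get
`exp (X • D_j) Q_j = Q_j + X`, so `S_j` kills `Q_j`, while `S_i` fixes `Q_j` for `i > j`.
Thus `P (Q_j) = S_1 ⋯ S_(j-1) 0 = 0`, and the ideal spanned by the `Q_j` lies in `ker P`.
-/

open Finset Nat Polynomial

namespace Derivation

section Leibniz

variable {R A : Type*} [CommSemiring R] [CommSemiring A] [Algebra R A] (D : Derivation R A A)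

theorem iterate_map_mul (n : ℕ) (a b : A) :
    (⇑D)^[n] (a * b) =
      ∑ ij ∈ antidiagonal n, n.choose ij.1 • ((⇑D)^[ij.1] a * (⇑D)^[ij.2] b) := by
  induction n with
  | zero => simp
  | succ n ih =>
    rw [sum_antidiagonal_choose_succ_nsmul (fun i j => (⇑D)^[i] a * (⇑D)^[j] b) n]
    simp only [Function.iterate_succ_apply', ih, map_sum, map_nsmul, leibniz, smul_eq_mul,
      smul_add, sum_add_distrib]
    congr 1
    refine sum_congr rfl fun ij hij => ?_
    rw [n.choose_symm_of_eq_add (mem_antidiagonal.1 hij).symm]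
    ring

end Leibniz

section Exp

variable {K A : Type*} [Field K] [CommRing A] [Algebra K A] (D : Derivation K A A)

noncomputable def truncExp (n : ℕ) (a : A) : A[X] :=
  ∑ r ∈ range n, monomial r ((r ! : K)⁻¹ • (⇑D)^[r] a)

theorem coeff_truncExp {n : ℕ} {a : A} (h : (⇑D)^[n] a = 0) (i : ℕ) :
    (D.truncExp n a).coeff i = (i ! : K)⁻¹ • (⇑D)^[i] a := by
  simp only [truncExp, finsetSum_coeff, coeff_monomial, sum_ite_eq', mem_range]
  split_ifs with hi
  · rfl
  · rw [← Nat.sub_add_cancel (not_lt.1 hi), Function.iterate_add_apply, h, iterate_map_zero,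
      smul_zero]

variable [CharZero K]

theorem inv_factorial_smul_iterate_map_mul (n : ℕ) (a b : A) :
    (n ! : K)⁻¹ • (⇑D)^[n] (a * b) =
      ∑ ij ∈ antidiagonal n,
        ((ij.1 ! : K)⁻¹ • (⇑D)^[ij.1] a) * ((ij.2 ! : K)⁻¹ • (⇑D)^[ij.2] b) := by
  rw [iterate_map_mul, smul_sum]
  refine sum_congr rfl fun ij hij => ?_
  rw [← mem_antidiagonal.1 hij, ← Nat.cast_smul_eq_nsmul K, smul_smul, smul_mul_smul_comm,
    Nat.cast_add_choose]
  congr 1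
  rw [← mul_div_assoc, inv_mul_cancel₀ (Nat.cast_ne_zero.2 (factorial_ne_zero _)), one_div,
    mul_inv]

variable (hD : ∀ a, ∃ n, (⇑D)^[n] a = 0)

noncomputable def expX : A →+* A[X] where
  toFun a := D.truncExp (hD a).choose a
  map_one' := by
    ext (_ | i) <;>
      simp [coeff_truncExp D (hD _).choose_spec, coeff_one, Function.iterate_succ_apply]
  map_mul' a b := by
    ext n
    simp only [coeff_mul, coeff_truncExp D (hD _).choose_spec]
    exact inv_factorial_smul_iterate_map_mul D n a b
  map_zero' := by
    ext i
    rw [coeff_truncExp D (hD _).choose_spec, iterate_map_zero, smul_zero, coeff_zero]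
  map_add' a b := by
    ext i
    rw [coeff_add, coeff_truncExp D (hD _).choose_spec, coeff_truncExp D (hD _).choose_spec,
      coeff_truncExp D (hD _).choose_spec, iterate_map_add, smul_add]

theorem coeff_expX (a : A) (i : ℕ) : (D.expX hD a).coeff i = (i ! : K)⁻¹ • (⇑D)^[i] a :=
  D.coeff_truncExp (hD a).choose_spec i

theorem expX_eq_truncExp {n : ℕ} {a : A} (h : (⇑D)^[n] a = 0) :
    D.expX hD a = D.truncExp n a := by
  ext i
  rw [coeff_expX, coeff_truncExp D h]

theorem expX_of_map_eq_zero {a : A} (h : D a = 0) : D.expX hD a = C a := by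
  rw [D.expX_eq_truncExp hD (n := 1) h]
  simp [truncExp]

theorem expX_of_map_eq_one {a : A} (h : D a = 1) : D.expX hD a = C a + X := by
  rw [D.expX_eq_truncExp hD (n := 2) (by simp [h])]
  simp [truncExp, sum_range_succ, h, X]

theorem eval_neg_expX {n : ℕ} {a : A} (h : (⇑D)^[n] a = 0) (c : A) :
    (D.expX hD a).eval (-c) =
      ∑ r ∈ range n, ((-1 : K) ^ r * (r ! : K)⁻¹) • (c ^ r * (⇑D)^[r] a) := by
  rw [D.expX_eq_truncExp hD h, truncExp, eval_finsetSum]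
  refine sum_congr rfl fun r _ => ?_
  rw [eval_monomial, neg_pow, mul_smul, smul_comm ((-1 : K) ^ r), Algebra.smul_def ((-1 : K) ^ r),
    map_pow, map_neg, map_one, smul_mul_assoc]
  congr 1
  ring

end Exp

end Derivation

namespace RingHom

variable {A : Type*} [Semiring A]

theorem coe_list_prod (l : List (A →+* A)) : ⇑l.prod = (l.map (⇑)).foldr (· ∘ ·) _root_.id := by
  induction l with
  | nil => rfl
  | cons f l ih => rw [List.prod_cons, coe_mul, ih]; rfl

theorem list_prod_apply_eq_self {l : List (A →+* A)} {x : A} (h : ∀ f ∈ l, f x = x) :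
    l.prod x = x := by
  induction l with
  | nil => rfl
  | cons f l ih =>
    rw [List.prod_cons, coe_mul, Function.comp_apply,
      ih fun g hg => h g (List.mem_cons_of_mem f hg), h f List.mem_cons_self]

theorem list_prod_ofFn_apply_eq_zero {k : ℕ} {f : Fin k → A →+* A} {x : A} {j : Fin k}
    (hj : f j x = 0) (hfix : ∀ i, j < i → f i x = x) : (List.ofFn f).prod x = 0 := by
  induction k with
  | zero => exact j.elim0
  | succ k ih =>
    rw [List.ofFn_succ, List.prod_cons, coe_mul, Function.comp_apply]
    cases j using Fin.cases with
    | zero =>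
      rw [list_prod_apply_eq_self, hj]
      simpa [List.mem_ofFn] using fun i => hfix i.succ (Fin.succ_pos i)
    | succ j =>
      rw [ih hj fun i hi => hfix i.succ (Fin.succ_lt_succ_iff.2 hi), map_zero]

end RingHom

/-- Given locally nilpotent derivations `D₁, …, D_k` and elements `Q₁, …, Q_k`
with `D_i Q_j = 0` for `i > j` and `D_j Q_j = 1`, the composition
`P = S₁ ∘ S₂ ∘ ⋯ ∘ S_k` of the associated homomorphisms kills every `Q_j`, and
hence the ideal generated by `Q₁, …, Q_k` lies in the kernel of `P`. -/
theorem stmt_9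
    (K : Type*) [Field K] [CharZero K]
    (A : Type*) [CommRing A] [Algebra K A]
    (k : ℕ) (D : Fin k → Derivation K A A) (Q : Fin k → A)
    (hD : ∀ (i : Fin k) (a : A), ∃ n : ℕ, (⇑(D i))^[n] a = 0)
    (hQ0 : ∀ i j : Fin k, j < i → D i (Q j) = 0)
    (hQ1 : ∀ j : Fin k, D j (Q j) = 1)
    (S : Fin k → A → A)
    (hS : ∀ (j : Fin k) (a : A) (n : ℕ), (⇑(D j))^[n] a = 0 →
      S j a = ∑ r ∈ Finset.range n,
        ((-1 : K) ^ r * (r.factorial : K)⁻¹) • (Q j ^ r * (⇑(D j))^[r] a))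
    (P : A → A) (hP : P = (List.ofFn S).foldr (· ∘ ·) id) :
    (∀ j : Fin k, P (Q j) = 0) ∧
    ∀ a ∈ Ideal.span (Set.range Q), P a = 0 := by
  let f : Fin k → A →+* A := fun j => (evalRingHom (-Q j)).comp ((D j).expX (hD j))
  have hSf : S = fun j => ⇑(f j) := by
    ext j a
    obtain ⟨n, hn⟩ := hD j a
    rw [hS j a n hn]
    exact ((D j).eval_neg_expX (hD j) hn (Q j)).symm
  have hPf : P = ⇑(List.ofFn f).prod := by
    rw [hP, hSf, RingHom.coe_list_prod, List.map_ofFn]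
    rfl
  have hPQ (j : Fin k) : P (Q j) = 0 := by
    rw [hPf]
    refine RingHom.list_prod_ofFn_apply_eq_zero (j := j) ?_ fun i hij => ?_
    · simp [f, (D j).expX_of_map_eq_one (hD j) (hQ1 j)]
    · simp [f, (D i).expX_of_map_eq_zero (hD i) (hQ0 i j hij)]
  refine ⟨hPQ, fun a ha => ?_⟩
  have hker : Ideal.span (Set.range Q) ≤ RingHom.ker (List.ofFn f).prod :=
    Ideal.span_le.2 (Set.range_subset_iff.2 fun j => RingHom.mem_ker.2 (hPf ▸ hPQ j))
  exact hPf ▸ hker ha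
end

section
/- Let K be a field of characteristic zero, A a commutative K-algebra, and let D₁, …, D_k be locally nilpotent K-derivations of A together with elements Q₁, …, Q_k ∈ A satisfying: D_i(Q_j) = 0 whenever i > j, D_j(Q_j) = 1 for each j, and for all s < t the commutator [D_t, D_s] = D_t ∘ D_s − D_s ∘ D_t lies in the K-linear span of {D_u : u > t} inside the space of K-linear endomorphisms of A. For each j let S_j : A → A be the map S_j(a) = Σ_{r≥0} (−1)^r (r!)^{−1} Q_j^r D_j^r(a), and set P = S₁ ∘ S₂ ∘ ⋯ ∘ S_k. Then: (1) D_i(P(a)) = 0 for every a ∈ A and every 1 ≤ i ≤ k; and (2) P(a) = a whenever D_i(a) = 0 for all 1 ≤ i ≤ k. In particular P is a K-algebra homomorphism of A onto its subalgebra of common (D₁, …, D_k)-invariants, identical on that subalgebra. -/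
/-!
Let `V_j = {a | D_i a = 0 for all i ≥ j}`, so that `V_1` is the ring of common invariants and
`V_{k+1} = A`. The image of each Dixmier map `S_j` is killed by `D_j`, since `D_j Q_j = 1` makes
`D_j` of its defining sum telescope, and `S_j` maps `V_{j+1}` into `V_j`, since the commutator
condition makes `V_{j+1}` stable under `D_j` while `D_i Q_j = 0` for `i > j`. Hence
`P = S_1 ∘ ⋯ ∘ S_k` maps `A` into `V_1`, and it fixes `V_1` because each `S_j` fixes `ker D_j`.
-/

open Set

section CommonKernel

variable {R M ι : Type*} [CommRing R] [AddCommGroup M] [Module R M]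

theorem LinearMap.apply_eq_zero_of_mem_span {s : Set (M →ₗ[R] M)} {b : M}
    (hb : ∀ f ∈ s, f b = 0) {g : M →ₗ[R] M} (hg : g ∈ Submodule.span R s) : g b = 0 :=
  Submodule.span_le (p := LinearMap.ker (LinearMap.applyₗ b)).mpr hb hg

theorem mapsTo_iterate_of_commutator_mem_span (E : ι → M →ₗ[R] M) (F : M →ₗ[R] M) (I : Set ι)
    (h : ∀ i ∈ I, E i ∘ₗ F - F ∘ₗ E i ∈ Submodule.span R (E '' I)) (n : ℕ) :
    MapsTo F^[n] {b | ∀ i ∈ I, E i b = 0} {b | ∀ i ∈ I, E i b = 0} := by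
  refine MapsTo.iterate (fun b hb i hi => ?_) n
  have hker : ∀ f ∈ E '' I, f b = 0 := by
    rintro _ ⟨u, hu, rfl⟩
    exact hb u hu
  have := LinearMap.apply_eq_zero_of_mem_span hker (h i hi)
  simpa [hb i hi] using this

theorem sum_smul_mem_span_image [Fintype ι] (f : ι → M) (c : ι → R) {s : Set ι}
    (hc : ∀ u ∉ s, c u = 0) : ∑ u, c u • f u ∈ Submodule.span R (f '' s) := by
  refine Submodule.sum_mem _ fun u _ => ?_
  by_cases hu : u ∈ s
  · exact Submodule.smul_mem _ _ (Submodule.subset_span (mem_image_of_mem f hu))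
  · simp [hc u hu]

end CommonKernel

section Dixmier

variable {K A : Type*} [Field K] [CommRing A] [Algebra K A]

noncomputable def dixmierSum (D : Derivation K A A) (Q : A) (n : ℕ) (a : A) : A :=
  ∑ r ∈ Finset.range n, ((-1 : K) ^ r * (r.factorial : K)⁻¹) • (Q ^ r * (⇑D)^[r] a)

variable {D : Derivation K A A} {Q : A}

@[simp]
theorem dixmierSum_zero (a : A) : dixmierSum D Q 0 a = 0 := by
  simp [dixmierSum]

@[simp]
theorem dixmierSum_one (a : A) : dixmierSum D Q 1 a = a := by
  simp [dixmierSum]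

theorem dixmierSum_succ (n : ℕ) (a : A) : dixmierSum D Q (n + 1) a =
    dixmierSum D Q n a + ((-1 : K) ^ n * (n.factorial : K)⁻¹) • (Q ^ n * (⇑D)^[n] a) :=
  Finset.sum_range_succ _ _

theorem neg_one_pow_succ_mul_inv_factorial_mul [CharZero K] (n : ℕ) :
    (-1 : K) ^ (n + 1) * ((n + 1).factorial : K)⁻¹ * (n + 1 : ℕ) =
      -((-1 : K) ^ n * (n.factorial : K)⁻¹) := by
  rw [Nat.factorial_succ, Nat.cast_mul, pow_succ]
  have : ((n : K) + 1) ≠ 0 := Nat.cast_add_one_ne_zero n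
  push_cast
  field_simp

theorem Derivation.apply_dixmierSum_succ [CharZero K]
    (hQ : D Q = 1) (n : ℕ) (a : A) :
    D (dixmierSum D Q (n + 1) a) =
      ((-1 : K) ^ n * (n.factorial : K)⁻¹) • (Q ^ n * (⇑D)^[n + 1] a) := by
  induction n with
  | zero => simp
  | succ n ih =>
    rw [dixmierSum_succ, map_add, ih, Derivation.map_smul, Derivation.leibniz,
      Derivation.leibniz_pow, hQ, ← Function.iterate_succ_apply' D]
    have hterm : Q ^ (n + 1) • (⇑D)^[(n + 1).succ] a +
          (⇑D)^[n + 1] a • (n + 1) • Q ^ (n + 1 - 1) • (1 : A) =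
        Q ^ (n + 1) * (⇑D)^[n + 1 + 1] a + ((n + 1 : ℕ) : K) • (Q ^ n * (⇑D)^[n + 1] a) := by
      rw [Nat.cast_smul_eq_nsmul]
      simp only [smul_eq_mul, nsmul_eq_mul, Nat.add_sub_cancel, mul_one]
      ring
    rw [hterm, smul_add, smul_smul, neg_one_pow_succ_mul_inv_factorial_mul, neg_smul]
    abel

theorem Derivation.apply_dixmierSum_eq_zero [CharZero K] (hQ : D Q = 1) {n : ℕ} {a : A}
    (ha : (⇑D)^[n] a = 0) : D (dixmierSum D Q n a) = 0 := by
  cases n with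
  | zero => simp
  | succ n => rw [apply_dixmierSum_succ hQ, ha, mul_zero, smul_zero]

theorem Derivation.apply_dixmierSum_eq_zero_of_forall_iterate (E : Derivation K A A)
    (hQ : E Q = 0) {a : A} (ha : ∀ r, E ((⇑D)^[r] a) = 0) (n : ℕ) :
    E (dixmierSum D Q n a) = 0 := by
  refine (map_sum E _ _).trans (Finset.sum_eq_zero fun r _ => ?_)
  simp [Derivation.leibniz, Derivation.leibniz_pow, hQ, ha]

end Dixmier

section Composition

variable {X : Type*}

theorem List.eqOn_foldr_comp_id {s : Set X} (L : List (X → X)) (h : ∀ f ∈ L, EqOn f id s) :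
    EqOn (L.foldr (· ∘ ·) id) id s := by
  induction L with
  | nil => exact fun _ _ => rfl
  | cons f L ih =>
    rw [List.foldr_cons]
    intro x hx
    rw [Function.comp_apply, ih (fun g hg => h g (List.mem_cons_of_mem f hg)) hx]
    exact h f List.mem_cons_self hx

theorem List.mapsTo_foldr_ofFn_comp {n : ℕ} (S : Fin n → X → X) (V : ℕ → Set X)
    (h : ∀ j : Fin n, MapsTo (S j) (V (j + 1)) (V j)) :
    MapsTo ((List.ofFn S).foldr (· ∘ ·) id) (V n) (V 0) := by
  induction n generalizing V with
  | zero => exact mapsTo_id _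
  | succ n ih =>
    rw [List.ofFn_succ, List.foldr_cons]
    exact (h 0).comp <|
      ih (fun j => S j.succ) (fun j => V (j + 1)) fun j => by simpa using h j.succ

end Composition

/-- Given locally nilpotent derivations `D₁, …, D_k` and elements `Q₁, …, Q_k`
with `D_i Q_j = 0` for `i > j`, `D_j Q_j = 1`, and such that for `s < t` the
commutator `[D_t, D_s]` lies in the `K`-span of `{D_u : u > t}`, the composition
`P = S₁ ∘ ⋯ ∘ S_k` of the associated homomorphisms satisfies `D_i (P a) = 0` for
all `a` and `i`, and `P a = a` whenever all `D_i a = 0`. -/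
theorem stmt_10
    (K : Type*) [Field K] [CharZero K]
    (A : Type*) [CommRing A] [Algebra K A]
    (k : ℕ) (D : Fin k → Derivation K A A) (Q : Fin k → A)
    (hD : ∀ (i : Fin k) (a : A), ∃ n : ℕ, (⇑(D i))^[n] a = 0)
    (hQ0 : ∀ i j : Fin k, j < i → D i (Q j) = 0)
    (hQ1 : ∀ j : Fin k, D j (Q j) = 1)
    (hcomm : ∀ s t : Fin k, s < t → ∃ c : Fin k → K,
      (∀ u : Fin k, u ≤ t → c u = 0) ∧
      ((D t : A →ₗ[K] A) ∘ₗ (D s : A →ₗ[K] A) - (D s : A →ₗ[K] A) ∘ₗ (D t : A →ₗ[K] A))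
        = ∑ u : Fin k, c u • (D u : A →ₗ[K] A))
    (S : Fin k → A → A)
    (hS : ∀ (j : Fin k) (a : A) (n : ℕ), (⇑(D j))^[n] a = 0 →
      S j a = ∑ r ∈ Finset.range n,
        ((-1 : K) ^ r * (r.factorial : K)⁻¹) • (Q j ^ r * (⇑(D j))^[r] a))
    (P : A → A) (hP : P = (List.ofFn S).foldr (· ∘ ·) id) :
    (∀ (a : A) (i : Fin k), D i (P a) = 0) ∧
    ∀ a : A, (∀ i : Fin k, D i a = 0) → P a = a := by
  have hSD : ∀ j a n, (⇑(D j))^[n] a = 0 → S j a = dixmierSum (D j) (Q j) n a := hS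
  have hspan : ∀ s t : Fin k, s < t → (D t : A →ₗ[K] A) ∘ₗ D s - (D s : A →ₗ[K] A) ∘ₗ D t ∈
      Submodule.span K ((fun u => (D u : A →ₗ[K] A)) '' Ioi s) := by
    intro s t hst
    obtain ⟨c, hc0, hc⟩ := hcomm s t hst
    exact hc ▸ sum_smul_mem_span_image _ c fun u hu =>
      hc0 u (not_lt.mp fun h => hu (hst.trans h))
  let V : ℕ → Set A := fun j => {a | ∀ i : Fin k, j ≤ i.val → D i a = 0}
  have hstep : ∀ j : Fin k, MapsTo (S j) (V (j + 1)) (V j) := by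
    intro j a ha i hji
    obtain ⟨n, hn⟩ := hD j a
    rw [hSD j a n hn]
    rcases hji.eq_or_lt with hij | hji
    · rw [Fin.ext hij.symm]
      exact (D j).apply_dixmierSum_eq_zero (hQ1 j) hn
    · refine Derivation.apply_dixmierSum_eq_zero_of_forall_iterate (D i) (hQ0 i j hji)
        (fun r => ?_) n
      exact mapsTo_iterate_of_commutator_mem_span _ _ (Ioi j) (hspan j) r
        (fun u hu => ha u hu) i hji
  have hfix : ∀ j : Fin k, EqOn (S j) id (V 0) := fun j a ha => by
    rw [hSD j a 1 (ha j j.val.zero_le), dixmierSum_one, id]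
  subst hP
  refine ⟨fun a i => List.mapsTo_foldr_ofFn_comp S V hstep ?_ i i.val.zero_le,
    fun a ha => List.eqOn_foldr_comp_id _ (List.forall_mem_ofFn_iff.mpr hfix)
      (show a ∈ V 0 from fun i _ => ha i)⟩
  exact fun i hi => absurd i.isLt (not_lt.mpr hi)
end
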